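/- The proof system L′_KC (propositional tautologies, modus ponens, interventionist axioms A1–A7, the S5 principles for K, and the axiom KL) is strongly complete for the language L′_KC with respect to epistemic recursive causal models: for every set Δ ∪ {δ} of L′_KC formulas, if every pointed epistemic causal model satisfying all formulas of Δ satisfies δ, then Δ proves δ in L′_KC. -/

import Mathlib

open Classical

/-- A finite signature: variables sorted into exogenous and endogenous, each with a
finite nonempty range of values. -/
structure Sig : Type 1 where
  Var : Type
  exo : Var → Prop
  Val : Var → Type
  [decEqVar : DecidableEq Var]
  [finVar : Fintype Var]
  [neVar : Nonempty Var]
  [decEqVal : ∀ X : Var, DecidableEq (Val X)]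
  [finVal : ∀ X : Var, Fintype (Val X)]
  [neVal : ∀ X : Var, Nonempty (Val X)]

attribute [instance] Sig.decEqVar Sig.finVar Sig.neVar Sig.decEqVal Sig.finVal Sig.neVal

variable {S : Sig}

/-- A valuation: a value for each variable. -/
abbrev Env (S : Sig) : Type := ∀ X : S.Var, S.Val X

instance : Nonempty (Env S) := ⟨fun X => Classical.arbitrary (S.Val X)⟩

/-- Values for all variables other than `V`. -/
abbrev Others (S : Sig) (V : S.Var) : Type := ∀ X : {X : S.Var // X ≠ V}, S.Val X.val

/-- The restriction of a valuation to the variables other than `V`. -/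
def Env.restrict (A : Env S) (V : S.Var) : Others S V := fun X => A X.val

/-- A family of structural functions (only the components at endogenous variables
are meaningful). -/
abbrev StructFuns (S : Sig) : Type := ∀ V : S.Var, Others S V → S.Val V

/-- A valuation complies with the structural functions: the value of each endogenous
variable is obtained by applying its structural function to the values of all
other variables. -/
def Complies (F : StructFuns S) (A : Env S) : Prop :=
  ∀ V : S.Var, ¬ S.exo V → A V = F V (A.restrict V)

/-- The endogenous variable `V` is directly causally affected by `X` under `F`. -/
def DirAff (F : StructFuns S) (X V : S.Var) : Prop :=
  ¬ S.exo V ∧ ∃ (h : X ≠ V) (g : Others S V) (x₁ x₂ : S.Val X),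
    x₁ ≠ x₂ ∧
      F V (Function.update g ⟨X, h⟩ x₁) ≠ F V (Function.update g ⟨X, h⟩ x₂)

/-- `F` is recursive: the transitive closure of the direct causal dependence
relation is asymmetric (transitivity is automatic for `Relation.TransGen`). -/
def RecursiveF (F : StructFuns S) : Prop :=
  ∀ a b : S.Var, Relation.TransGen (DirAff F) a b → ¬ Relation.TransGen (DirAff F) b a

/-- An assignment of values to a set of pairwise distinct variables. -/
abbrev Intervention (S : Sig) : Type := ∀ X : S.Var, Option (S.Val X)

/-- The empty assignment. -/
def iEmpty (S : Sig) : Intervention S := fun _ => none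

/-- Extend an assignment by additionally setting `Y` to `y` (overriding). -/
def iUpd (I : Intervention S) (Y : S.Var) (y : S.Val Y) : Intervention S :=
  Function.update I Y (some y)

/-- Combine assignments, the second overriding the first:  `[X⃗ := x⃗, Y⃗ := y⃗]`. -/
def icomp (I J : Intervention S) : Intervention S := fun W =>
  match J W with
  | some v => some v
  | none => I W

/-- The intervened family of structural functions: intervened variables get the
constant function returning the assigned value; the rest are unchanged. -/
def intF (F : StructFuns S) (I : Intervention S) : StructFuns S :=
  fun V g => (I V).getD (F V g)

/-- `A'` is the result of intervening with `I` on the valuation `A` (w.r.t. `F`):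
exogenous intervened variables get the assigned value, exogenous non-intervened
variables keep their value, and each endogenous variable complies with its new
structural function. -/
def IntervenedVal (F : StructFuns S) (A : Env S) (I : Intervention S) (A' : Env S) : Prop :=
  (∀ X : S.Var, S.exo X → ∀ v : S.Val X, I X = some v → A' X = v) ∧
  (∀ X : S.Var, S.exo X → I X = none → A' X = A X) ∧
  (∀ V : S.Var, ¬ S.exo V → A' V = intF F I V (A'.restrict V))

/-- The intervened valuation (unique when `F` is recursive). -/
noncomputable def intVal (F : StructFuns S) (A : Env S) (I : Intervention S) : Env S :=
  Classical.epsilon (IntervenedVal F A I)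

/-- The language L_KC: atoms `Y = y`, negation, conjunction, knowledge, and
interventionist counterfactual operators. -/
inductive Form (S : Sig) : Type where
  | eq (Y : S.Var) (y : S.Val Y) : Form S
  | neg (φ : Form S) : Form S
  | conj (φ ψ : Form S) : Form S
  | know (φ : Form S) : Form S
  | int (I : Intervention S) (φ : Form S) : Form S

namespace Form

/-- Material implication, defined from `¬` and `∧` as usual. -/
def impl (φ ψ : Form S) : Form S := Form.neg (Form.conj φ (Form.neg ψ))

/-- Disjunction, defined from `¬` and `∧` as usual. -/
def orF (φ ψ : Form S) : Form S := Form.neg (Form.conj (Form.neg φ) (Form.neg ψ))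

/-- Biconditional. -/
def iffF (φ ψ : Form S) : Form S := Form.conj (impl φ ψ) (impl ψ φ)

end Form

/-- A canonical contradiction. -/
noncomputable def botF (S : Sig) : Form S :=
  let X : S.Var := Classical.arbitrary S.Var
  let x : S.Val X := Classical.arbitrary (S.Val X)
  Form.conj (Form.eq X x) (Form.neg (Form.eq X x))

/-- A canonical tautology. -/
noncomputable def topF (S : Sig) : Form S := Form.neg (botF S)

/-- Disjunction of a list of formulas (the empty disjunction is a contradiction). -/
noncomputable def bigOr : List (Form S) → Form S
  | [] => botF S
  | φ :: l => l.foldl Form.orF φ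

/-- Conjunction of a list of formulas (the empty conjunction is a tautology). -/
noncomputable def bigConj : List (Form S) → Form S
  | [] => topF S
  | φ :: l => l.foldl Form.conj φ

/-- `φ` is an instance of a propositional tautology: it evaluates to `true` under
every Boolean valuation that respects negation and conjunction (treating all
other formulas as atoms). -/
def Tauto (φ : Form S) : Prop :=
  ∀ v : Form S → Bool,
    (∀ ψ : Form S, v (Form.neg ψ) = !(v ψ)) →
    (∀ ψ χ : Form S, v (Form.conj ψ χ) = (v ψ && v χ)) →
    v φ = true

/-- The assignment `[Z⃗ := z⃗, X := x]` where `Z⃗` lists all variables other than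
`X` and `V`, used in the formula `X ⇝ V`. -/
def ltInt (X V : S.Var) (g : ∀ W : {W : S.Var // W ≠ X ∧ W ≠ V}, S.Val W.val)
    (x : S.Val X) : Intervention S := fun W =>
  if h : W = X then some (h.symm ▸ x)
  else if h' : W = V then none
  else some (g ⟨W, ⟨h, h'⟩⟩)

/-- The formula `X ⇝ V`: the disjunction, over tuples `z⃗` of values for all
variables other than `X` and `V`, distinct values `x₁ ≠ x₂` of `X` and distinct
values `v₁ ≠ v₂` of `V`, of `[Z⃗:=z⃗, X:=x₁]V=v₁ ∧ [Z⃗:=z⃗, X:=x₂]V=v₂`. -/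
noncomputable def leadsTo (X V : S.Var) : Form S :=
  bigOr ((Finset.univ.filter
      (fun p : (∀ W : {W : S.Var // W ≠ X ∧ W ≠ V}, S.Val W.val) ×
          (S.Val X × S.Val X) × (S.Val V × S.Val V) =>
        p.2.1.1 ≠ p.2.1.2 ∧ p.2.2.1 ≠ p.2.2.2)).toList.map
    (fun p =>
      Form.conj
        (Form.int (ltInt X V p.1 p.2.1.1) (Form.eq V p.2.2.1))
        (Form.int (ltInt X V p.1 p.2.1.2) (Form.eq V p.2.2.2))))

/-- The chain `X₀ ⇝ X₁ ∧ ⋯ ∧ X_k ⇝ X_{k+1}`. -/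
noncomputable def chainConj (X : ℕ → S.Var) : ℕ → Form S
  | 0 => leadsTo (X 0) (X 1)
  | n + 1 => Form.conj (chainConj X n) (leadsTo (X (n + 1)) (X (n + 2)))

/-- `ψ₁ → (ψ₂ → ⋯ → (ψₙ → φ))` for a list of premises. -/
def impsFrom : List (Form S) → Form S → Form S
  | [], φ => φ
  | ψ :: l, φ => Form.impl ψ (impsFrom l φ)

/-- Satisfaction of an L_KC formula at a pointed epistemic causal model
`(⟨F, T⟩, A)`. -/
def SatK : Form S → StructFuns S → Set (Env S) → Env S → Prop
  | Form.eq Y y, _, _, A => A Y = y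
  | Form.neg φ, F, T, A => ¬ SatK φ F T A
  | Form.conj φ ψ, F, T, A => SatK φ F T A ∧ SatK ψ F T A
  | Form.know φ, F, T, _ => ∀ B ∈ T, SatK φ F T B
  | Form.int I φ, F, T, A =>
      SatK φ (intF F I) ((fun B => intVal F B I) '' T) (intVal F A I)

/-- The proof system L′_KC: propositional tautologies, modus ponens, the
interventionist axioms A1–A7, the S5 principles for K, and the axiom KL. -/
inductive ThmKC' : Form S → Prop where
  | taut : ∀ {φ : Form S}, Tauto φ → ThmKC' φ
  | mp : ∀ {φ ψ : Form S}, ThmKC' (Form.impl φ ψ) → ThmKC' φ → ThmKC' ψ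
  | a1 : ∀ (I : Intervention S) (Y : S.Var) (y y' : S.Val Y), y ≠ y' →
      ThmKC' (Form.impl (Form.int I (Form.eq Y y)) (Form.neg (Form.int I (Form.eq Y y'))))
  | a2 : ∀ (I : Intervention S) (Y : S.Var),
      ThmKC' (bigOr (((Finset.univ : Finset (S.Val Y)).toList).map
        (fun y => Form.int I (Form.eq Y y))))
  | a3 : ∀ (I : Intervention S) (Y Z : S.Var) (y : S.Val Y) (z : S.Val Z),
      ThmKC' (Form.impl (Form.conj (Form.int I (Form.eq Y y)) (Form.int I (Form.eq Z z)))
        (Form.int (iUpd I Y y) (Form.eq Z z)))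
  | a4 : ∀ (I : Intervention S) (Y : S.Var) (y : S.Val Y),
      ThmKC' (Form.int (iUpd I Y y) (Form.eq Y y))
  | a5 : ∀ (I : Intervention S) (Y Z : S.Var) (y : S.Val Y) (z : S.Val Z), Y ≠ Z →
      ThmKC' (Form.impl
        (Form.conj (Form.int (iUpd I Y y) (Form.eq Z z)) (Form.int (iUpd I Z z) (Form.eq Y y)))
        (Form.int I (Form.eq Z z)))
  | a6 : ∀ (X : ℕ → S.Var) (k : ℕ),
      (∀ i : ℕ, i ≤ k → X i ≠ X (i + 1)) → X (k + 1) ≠ X 0 →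
      ThmKC' (Form.impl (chainConj X k) (Form.neg (leadsTo (X (k + 1)) (X 0))))
  | a7 : ∀ (I : Intervention S) (U : S.Var) (u : S.Val U), S.exo U → I U = none →
      ThmKC' (Form.iffF (Form.int (iEmpty S) (Form.eq U u)) (Form.int I (Form.eq U u)))
  | axK : ∀ (φ ψ : Form S),
      ThmKC' (Form.impl (Form.know (Form.impl φ ψ))
        (Form.impl (Form.know φ) (Form.know ψ)))
  | necK : ∀ {φ : Form S}, ThmKC' φ → ThmKC' (Form.know φ)
  | axT : ∀ (φ : Form S), ThmKC' (Form.impl (Form.know φ) φ)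
  | ax4 : ∀ (φ : Form S), ThmKC' (Form.impl (Form.know φ) (Form.know (Form.know φ)))
  | ax5 : ∀ (φ : Form S),
      ThmKC' (Form.impl (Form.neg (Form.know φ)) (Form.know (Form.neg (Form.know φ))))
  | kl : ∀ (I : Intervention S) (Y : S.Var) (y : S.Val Y), ¬ S.exo Y →
      (∀ W : S.Var, (I W).isSome ↔ W ≠ Y) →
      ThmKC' (Form.impl (Form.int I (Form.eq Y y))
        (Form.know (Form.int I (Form.eq Y y))))

/-- Strong derivability from a set of premises in L′_KC. -/
def ProvKC' (Γ : Set (Form S)) (φ : Form S) : Prop :=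
  ∃ l : List (Form S), (∀ ψ ∈ l, ψ ∈ Γ) ∧ ThmKC' (impsFrom l φ)

/-- The language L′_KC: formulas generated from `[X⃗:=x⃗]Y=y` by `¬`, `∧` and `K`. -/
inductive IsKC' : Form S → Prop where
  | intEq : ∀ (I : Intervention S) (Y : S.Var) (y : S.Val Y),
      IsKC' (Form.int I (Form.eq Y y))
  | neg : ∀ {φ : Form S}, IsKC' φ → IsKC' (Form.neg φ)
  | conj : ∀ {φ ψ : Form S}, IsKC' φ → IsKC' ψ → IsKC' (Form.conj φ ψ)
  | know : ∀ {φ : Form S}, IsKC' φ → IsKC' (Form.know φ)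

/-!
Canonical model construction. Extend `Δ ∪ {¬δ}` to a maximal consistent set `Γ`. Each maximal
consistent set `Γ'` decides, for every intervention `I`, a unique value of each variable (A1, A2),
giving a valuation `canonicalEnv Γ' I`. The structural function at `V` is read off `Γ` at the
interventions fixing all variables but `V`; by KL it is the same for every `Γ'` in the S5-cluster
of `Γ`, and by A6 it is recursive, so intervened valuations are unique. A3, A4 and A7 show that
`canonicalEnv Γ' I` is the intervened valuation of `canonicalEnv Γ' ∅`, which yields the truth
lemma for the model whose worlds are the valuations `canonicalEnv Γ' ∅` of the cluster.
-/

def IsValuation (v : Form S → Bool) : Prop :=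
  (∀ ψ : Form S, v (Form.neg ψ) = !(v ψ)) ∧ (∀ ψ χ : Form S, v (Form.conj ψ χ) = (v ψ && v χ))

namespace IsValuation

variable {v : Form S → Bool}

theorem eval_neg (hv : IsValuation v) (φ : Form S) :
    v (Form.neg φ) = true ↔ ¬ v φ = true := by
  simp [hv.1]

theorem eval_conj (hv : IsValuation v) (φ ψ : Form S) :
    v (Form.conj φ ψ) = true ↔ v φ = true ∧ v ψ = true := by
  simp [hv.2]

theorem eval_impl (hv : IsValuation v) (φ ψ : Form S) :
    v (Form.impl φ ψ) = true ↔ (v φ = true → v ψ = true) := by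
  simp only [Form.impl, hv.eval_neg, hv.eval_conj]
  tauto

theorem eval_iffF (hv : IsValuation v) (φ ψ : Form S) :
    v (Form.iffF φ ψ) = true ↔ (v φ = true ↔ v ψ = true) := by
  simp only [Form.iffF, hv.eval_conj, hv.eval_impl]
  tauto

theorem eval_orF (hv : IsValuation v) (φ ψ : Form S) :
    v (Form.orF φ ψ) = true ↔ v φ = true ∨ v ψ = true := by
  simp only [Form.orF, hv.eval_neg, hv.eval_conj]
  tauto

theorem eval_botF (hv : IsValuation v) : ¬ v (botF S) = true := by
  simp [botF, hv.eval_conj, hv.eval_neg]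

theorem eval_bigOr (hv : IsValuation v) (l : List (Form S)) :
    v (bigOr l) = true ↔ ∃ φ ∈ l, v φ = true := by
  have foldl_orF : ∀ (l : List (Form S)) (φ : Form S),
      v (l.foldl Form.orF φ) = true ↔ v φ = true ∨ ∃ ψ ∈ l, v ψ = true := by
    intro l
    induction l with
    | nil => simp
    | cons ψ l ih => intro φ; simp [ih, hv.eval_orF, or_assoc]
  cases l with
  | nil => simpa [bigOr] using hv.eval_botF
  | cons φ l => simp [bigOr, foldl_orF]

theorem eval_impsFrom (hv : IsValuation v) (l : List (Form S)) (φ : Form S) :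
    v (impsFrom l φ) = true ↔ ((∀ ψ ∈ l, v ψ = true) → v φ = true) := by
  induction l with
  | nil => simp [impsFrom]
  | cons ψ l ih => simp [impsFrom, hv.eval_impl, ih]

end IsValuation

def Entails (l : List (Form S)) (φ : Form S) : Prop :=
  ∀ v : Form S → Bool, IsValuation v → (∀ ψ ∈ l, v ψ = true) → v φ = true

theorem Entails.thmKC' {l : List (Form S)} {φ : Form S} (h : Entails l φ) :
    ThmKC' (impsFrom l φ) :=
  ThmKC'.taut fun v hn hc => (IsValuation.eval_impsFrom ⟨hn, hc⟩ l φ).2 (h v ⟨hn, hc⟩)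

theorem Entails.impl_of_cons {l : List (Form S)} {φ ψ : Form S} (h : Entails (ψ :: l) φ) :
    Entails l (Form.impl ψ φ) := by
  intro v hv hl
  rw [hv.eval_impl]
  intro hψ
  exact h v hv (by simpa [hψ] using hl)

theorem ThmKC'.of_entails {l : List (Form S)} {φ : Form S} (h : Entails l φ)
    (hl : ∀ ψ ∈ l, ThmKC' ψ) : ThmKC' φ := by
  induction l generalizing φ with
  | nil => exact h.thmKC'
  | cons ψ l ih =>
    exact ThmKC'.mp (ih h.impl_of_cons fun χ hχ => hl χ (by simp [hχ])) (hl ψ (by simp))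

namespace ProvKC'

variable {Γ : Set (Form S)} {φ ψ : Form S}

theorem of_thm (h : ThmKC' φ) : ProvKC' Γ φ :=
  ⟨[], by simp, h⟩

theorem of_mem (h : φ ∈ Γ) : ProvKC' Γ φ :=
  ⟨[φ], by simpa using h, Entails.thmKC' fun _ _ hv => hv φ (by simp)⟩

theorem mp (h₁ : ProvKC' Γ (Form.impl φ ψ)) (h₂ : ProvKC' Γ φ) : ProvKC' Γ ψ := by
  obtain ⟨l₁, hl₁, t₁⟩ := h₁
  obtain ⟨l₂, hl₂, t₂⟩ := h₂
  refine ⟨l₁ ++ l₂, by simpa [or_imp, forall_and] using ⟨hl₁, hl₂⟩,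
    ThmKC'.of_entails (l := [_, _]) ?_ (by simpa using ⟨t₁, t₂⟩)⟩
  intro v hv hl
  simp only [List.mem_cons, List.not_mem_nil, or_false, forall_eq,
    hv.eval_impsFrom, hv.eval_impl, List.mem_append, or_imp, forall_and] at hl ⊢
  tauto

theorem deduction (h : ProvKC' (insert φ Γ) ψ) : ProvKC' Γ (Form.impl φ ψ) := by
  obtain ⟨l, hl, t⟩ := h
  refine ⟨l.filter (· ≠ φ), fun χ hχ => ?_, ThmKC'.of_entails (l := [_]) ?_ (by simpa using t)⟩
  · simp only [List.mem_filter, decide_eq_true_eq] at hχ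
    exact (hl χ hχ.1).resolve_left hχ.2
  · intro v hv hl
    simp only [List.mem_singleton, forall_eq, hv.eval_impsFrom, hv.eval_impl, List.mem_filter,
      decide_eq_true_eq] at hl ⊢
    intro hfilter hφ
    exact hl fun χ hχ => if hχφ : χ = φ then hχφ ▸ hφ else hfilter χ ⟨hχ, hχφ⟩

theorem of_entails {l : List (Form S)} (h : Entails l φ) (hl : ∀ ψ ∈ l, ProvKC' Γ ψ) :
    ProvKC' Γ φ := by
  induction l generalizing φ with
  | nil => exact of_thm h.thmKC'
  | cons ψ l ih => exact (ih h.impl_of_cons fun χ hχ => hl χ (by simp [hχ])).mp (hl ψ (by simp))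

end ProvKC'

def Consistent (Γ : Set (Form S)) : Prop :=
  ¬ ProvKC' Γ (botF S)

def MaxConsistent (Γ : Set (Form S)) : Prop :=
  Maximal Consistent Γ

theorem ProvKC'.by_contradiction {Γ : Set (Form S)} {φ : Form S}
    (h : ProvKC' (insert (Form.neg φ) Γ) (botF S)) : ProvKC' Γ φ := by
  refine ProvKC'.of_entails (l := [_]) ?_ (by simpa using h.deduction)
  intro v hv hl
  simp only [List.mem_singleton, forall_eq, hv.eval_impl, hv.eval_neg] at hl
  by_contra hφ
  exact hv.eval_botF (hl hφ)

theorem exists_maxConsistent_superset {Γ : Set (Form S)} (h : Consistent Γ) :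
    ∃ Γ', Γ ⊆ Γ' ∧ MaxConsistent Γ' := by
  refine zorn_subset_nonempty {Δ | Consistent Δ} (fun c hc hchain hne => ?_) Γ h
  refine ⟨⋃₀ c, fun ⟨l, hl, t⟩ => ?_, fun _ => Set.subset_sUnion_of_mem⟩
  obtain ⟨Δ, hΔ, hlΔ⟩ := hchain.directedOn.exists_mem_subset_of_finite_of_subset_sUnion hne
    l.finite_toSet hl
  exact hc hΔ ⟨l, hlΔ, t⟩

namespace MaxConsistent

variable {Γ : Set (Form S)} {φ ψ : Form S}

theorem prov_botF_insert (hΓ : MaxConsistent Γ) (hφ : φ ∉ Γ) :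
    ProvKC' (insert φ Γ) (botF S) :=
  not_not.1 fun h => hφ (hΓ.2 h (Set.subset_insert φ Γ) (Set.mem_insert φ Γ))

theorem mem_of_prov (hΓ : MaxConsistent Γ) (h : ProvKC' Γ φ) : φ ∈ Γ := by
  by_contra hφ
  exact hΓ.1 ((hΓ.prov_botF_insert hφ).deduction.mp h)

theorem thm_mem (hΓ : MaxConsistent Γ) (h : ThmKC' φ) : φ ∈ Γ :=
  hΓ.mem_of_prov (.of_thm h)

theorem mem_of_entails (hΓ : MaxConsistent Γ) {l : List (Form S)} (h : Entails l φ)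
    (hl : ∀ ψ ∈ l, ψ ∈ Γ) : φ ∈ Γ :=
  hΓ.mem_of_prov (.of_entails h fun ψ hψ => .of_mem (hl ψ hψ))

theorem neg_mem_iff (hΓ : MaxConsistent Γ) : Form.neg φ ∈ Γ ↔ φ ∉ Γ := by
  refine ⟨fun hn hφ => hΓ.1 (.of_entails (l := [φ, Form.neg φ]) ?_ ?_), fun hφ => ?_⟩
  · intro v hv hl
    simp only [List.mem_cons, List.not_mem_nil, or_false, forall_eq_or_imp, forall_eq,
      hv.eval_neg] at hl
    exact absurd hl.1 hl.2
  · simpa using ⟨ProvKC'.of_mem hφ, ProvKC'.of_mem hn⟩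
  · by_contra hn
    exact hφ (hΓ.mem_of_prov (.by_contradiction (hΓ.prov_botF_insert hn)))

theorem conj_mem_iff (hΓ : MaxConsistent Γ) : Form.conj φ ψ ∈ Γ ↔ φ ∈ Γ ∧ ψ ∈ Γ := by
  refine ⟨fun h => ⟨hΓ.mem_of_entails (l := [_]) ?_ (by simpa using h),
    hΓ.mem_of_entails (l := [_]) ?_ (by simpa using h)⟩,
    fun h => hΓ.mem_of_entails (l := [φ, ψ]) ?_ (by simpa using h)⟩ <;>
  · intro v hv hl
    simp_all [hv.eval_conj]

theorem isValuation (hΓ : MaxConsistent Γ) : IsValuation fun φ => decide (φ ∈ Γ) :=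
  ⟨fun _ => by simp [hΓ.neg_mem_iff], fun _ _ => by simp [hΓ.conj_mem_iff]⟩

theorem impl_mem_iff (hΓ : MaxConsistent Γ) : Form.impl φ ψ ∈ Γ ↔ (φ ∈ Γ → ψ ∈ Γ) := by
  simpa using hΓ.isValuation.eval_impl φ ψ

theorem iffF_mem_iff (hΓ : MaxConsistent Γ) : Form.iffF φ ψ ∈ Γ ↔ (φ ∈ Γ ↔ ψ ∈ Γ) := by
  simpa using hΓ.isValuation.eval_iffF φ ψ

theorem bigOr_mem_iff (hΓ : MaxConsistent Γ) {l : List (Form S)} :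
    bigOr l ∈ Γ ↔ ∃ φ ∈ l, φ ∈ Γ := by
  simpa using hΓ.isValuation.eval_bigOr l

end MaxConsistent

def Accessible (Γ Γ' : Set (Form S)) : Prop :=
  ∀ φ, Form.know φ ∈ Γ → φ ∈ Γ'

namespace MaxConsistent

variable {Γ Γ₁ Γ₂ Γ₃ : Set (Form S)}

theorem accessible_refl (hΓ : MaxConsistent Γ) : Accessible Γ Γ :=
  fun φ => hΓ.impl_mem_iff.1 (hΓ.thm_mem (.axT φ))

theorem accessible_trans (h₁ : MaxConsistent Γ₁) (h₁₂ : Accessible Γ₁ Γ₂)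
    (h₂₃ : Accessible Γ₂ Γ₃) : Accessible Γ₁ Γ₃ :=
  fun φ hφ => h₂₃ φ (h₁₂ _ (h₁.impl_mem_iff.1 (h₁.thm_mem (.ax4 φ)) hφ))

theorem accessible_symm (h₁ : MaxConsistent Γ₁) (h₂ : MaxConsistent Γ₂)
    (h₁₂ : Accessible Γ₁ Γ₂) : Accessible Γ₂ Γ₁ := by
  intro φ hφ
  by_contra hφ₁
  have hK : Form.neg (Form.know φ) ∈ Γ₁ :=
    h₁.neg_mem_iff.2 fun hK => hφ₁ (h₁.accessible_refl φ hK)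
  exact h₂.neg_mem_iff.1 (h₁₂ _ (h₁.impl_mem_iff.1 (h₁.thm_mem (.ax5 φ)) hK)) hφ

end MaxConsistent

theorem ThmKC'.know_impsFrom {l : List (Form S)} {φ : Form S} (h : ThmKC' (impsFrom l φ)) :
    ThmKC' (impsFrom (l.map Form.know) (Form.know φ)) := by
  suffices distrib : ThmKC' (Form.impl (Form.know (impsFrom l φ))
      (impsFrom (l.map Form.know) (Form.know φ))) from distrib.mp h.necK
  clear h
  induction l with
  | nil => exact Entails.thmKC' (l := [_]) fun v _ hl => by simpa [impsFrom] using hl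
  | cons ψ l ih =>
    refine ThmKC'.of_entails (l := [_, _]) ?_ (by simpa using ⟨.axK ψ (impsFrom l φ), ih⟩)
    intro v hv hl
    simp only [List.mem_cons, List.not_mem_nil, or_false, forall_eq_or_imp, forall_eq,
      impsFrom, List.map_cons, hv.eval_impl] at hl ⊢
    tauto

theorem ProvKC'.know {Γ : Set (Form S)} {φ : Form S}
    (h : ProvKC' {ψ | Form.know ψ ∈ Γ} φ) : ProvKC' Γ (Form.know φ) := by
  obtain ⟨l, hl, t⟩ := h
  exact ⟨l.map Form.know, by simpa using hl, t.know_impsFrom⟩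

theorem MaxConsistent.exists_accessible_not_mem {Γ : Set (Form S)} {φ : Form S}
    (hΓ : MaxConsistent Γ) (hK : Form.know φ ∉ Γ) :
    ∃ Γ', MaxConsistent Γ' ∧ Accessible Γ Γ' ∧ φ ∉ Γ' := by
  have hcons : Consistent (insert (Form.neg φ) {ψ | Form.know ψ ∈ Γ}) :=
    fun h => hK (hΓ.mem_of_prov (ProvKC'.by_contradiction h).know)
  obtain ⟨Γ', hsub, hΓ'⟩ := exists_maxConsistent_superset hcons
  exact ⟨Γ', hΓ', fun ψ hψ => hsub (Set.mem_insert_of_mem _ hψ),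
    hΓ'.neg_mem_iff.1 (hsub (Set.mem_insert _ _))⟩

theorem Function.exists_update_ne_update {ι γ : Type*} [Fintype ι] [DecidableEq ι]
    {β : ι → Type*} (f : (∀ i, β i) → γ) {g₁ g₂ : ∀ i, β i} (h : f g₁ ≠ f g₂) :
    ∃ i g, g₁ i ≠ g₂ i ∧ f (Function.update g i (g₁ i)) ≠ f (Function.update g i (g₂ i)) := by
  suffices ∀ (s : Finset ι) (g₁ : ∀ i, β i), (∀ i ∉ s, g₁ i = g₂ i) → f g₁ ≠ f g₂ →
      ∃ i g, g₁ i ≠ g₂ i ∧ f (Function.update g i (g₁ i)) ≠ f (Function.update g i (g₂ i)) from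
    this Finset.univ g₁ (by simp) h
  intro s
  induction s using Finset.induction_on with
  | empty => exact fun g₁ hg hne => (hne (congrArg f (funext fun i => hg i (by simp)))).elim
  | insert a s _ ih =>
    intro g₁ hg hne
    by_cases hfa : f (Function.update g₁ a (g₂ a)) = f g₁
    · obtain ⟨i, g, hi, hfi⟩ := ih (Function.update g₁ a (g₂ a))
        (fun i hi => by rcases eq_or_ne i a with rfl | hia <;> simp_all) (hfa ▸ hne)
      have hia : i ≠ a := by rintro rfl; simp at hi
      exact ⟨i, g, by simpa [hia] using hi, by simpa [hia] using hfi⟩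
    · refine ⟨a, g₁, fun ha => hfa (by rw [← ha, Function.update_eq_self]), ?_⟩
      simpa [Function.update_eq_self] using Ne.symm hfa

theorem DirAff.ne {F : StructFuns S} {X V : S.Var} (h : DirAff F X V) : X ≠ V := by
  obtain ⟨-, hne, -⟩ := h
  exact hne

theorem RecursiveF.wellFounded {F : StructFuns S} (hF : RecursiveF F) :
    WellFounded (Relation.TransGen (DirAff F)) :=
  haveI : Std.Irrefl (Relation.TransGen (DirAff F)) := ⟨fun a ha => hF a a ha ha⟩
  Finite.wellFounded_of_trans_of_irrefl _

theorem IntervenedVal.unique {F : StructFuns S} {A A₁ A₂ : Env S} {I : Intervention S}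
    (h₁ : IntervenedVal F A I A₁) (hF : RecursiveF F) (h₂ : IntervenedVal F A I A₂) :
    A₁ = A₂ := by
  funext V
  -- A disagreement at an endogenous, non-intervened `V` forces one at a direct cause of `V`.
  induction V using hF.wellFounded.induction with
  | _ V ih =>
    by_cases hV : S.exo V
    · cases hI : I V with
      | none => rw [h₁.2.1 V hV hI, h₂.2.1 V hV hI]
      | some v => rw [h₁.1 V hV v hI, h₂.1 V hV v hI]
    · rw [h₁.2.2 V hV, h₂.2.2 V hV]
      cases hI : I V with
      | some v => simp [intF, hI]
      | none =>
        simp only [intF, hI, Option.getD_none]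
        by_contra hne
        obtain ⟨X, g, hX, hg⟩ := Function.exists_update_ne_update (F V) hne
        exact hX (ih X.1 (.single ⟨hV, X.2, g, _, _, hX, hg⟩))

theorem intVal_eq {F : StructFuns S} {A B : Env S} {I : Intervention S} (hF : RecursiveF F)
    (h : IntervenedVal F A I B) : intVal F A I = B :=
  (Classical.epsilon_spec ⟨B, h⟩ : IntervenedVal F A I (intVal F A I)).unique hF h

theorem Relation.TransGen.exists_seq {α : Type*} {r : α → α → Prop} {a b : α}
    (h : Relation.TransGen r a b) :
    ∃ (f : ℕ → α) (n : ℕ), f 0 = a ∧ f (n + 1) = b ∧ ∀ i ≤ n, r (f i) (f (i + 1)) := by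
  induction h using Relation.TransGen.head_induction_on with
  | @single a hab => exact ⟨fun i => if i = 0 then a else b, 0, rfl, rfl, by simpa using hab⟩
  | @head a c hac _ ih =>
    obtain ⟨f, n, hf0, hfn, hf⟩ := ih
    refine ⟨fun | 0 => a | i + 1 => f i, n + 1, rfl, hfn, fun i hi => ?_⟩
    cases i with
    | zero => simpa [hf0] using hac
    | succ i => exact hf i (by omega)

noncomputable def canonicalEnv (Γ : Set (Form S)) (I : Intervention S) : Env S :=
  fun Y => Classical.epsilon fun y => Form.int I (Form.eq Y y) ∈ Γ

def fullI (V : S.Var) (g : Others S V) : Intervention S :=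
  fun W => if h : W = V then none else some (g ⟨W, h⟩)

noncomputable def canonicalFuns (Γ : Set (Form S)) : StructFuns S :=
  fun V g => canonicalEnv Γ (fullI V g) V

def canonicalWorlds (Γ : Set (Form S)) : Set (Env S) :=
  (fun Γ' => canonicalEnv Γ' (iEmpty S)) '' {Γ' | MaxConsistent Γ' ∧ Accessible Γ Γ'}

namespace MaxConsistent

variable {Γ : Set (Form S)} {I : Intervention S}

theorem intEq_canonicalEnv_mem (hΓ : MaxConsistent Γ) (I : Intervention S) (Y : S.Var) :
    Form.int I (Form.eq Y (canonicalEnv Γ I Y)) ∈ Γ := by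
  refine Classical.epsilon_spec (p := fun y => Form.int I (Form.eq Y y) ∈ Γ) ?_
  obtain ⟨_, hmem, hφ⟩ := hΓ.bigOr_mem_iff.1 (hΓ.thm_mem (.a2 I Y))
  obtain ⟨y, -, rfl⟩ := List.mem_map.1 hmem
  exact ⟨y, hφ⟩

theorem intEq_mem_iff (hΓ : MaxConsistent Γ) {Y : S.Var} {y : S.Val Y} :
    Form.int I (Form.eq Y y) ∈ Γ ↔ canonicalEnv Γ I Y = y := by
  refine ⟨fun h => ?_, fun h => h ▸ hΓ.intEq_canonicalEnv_mem I Y⟩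
  by_contra hne
  exact hΓ.neg_mem_iff.1
    (hΓ.impl_mem_iff.1 (hΓ.thm_mem (.a1 I Y _ y hne)) (hΓ.intEq_canonicalEnv_mem I Y)) h

theorem canonicalEnv_of_some (hΓ : MaxConsistent Γ) {X : S.Var} {x : S.Val X}
    (h : I X = some x) : canonicalEnv Γ I X = x := by
  have hI : iUpd I X x = I := Function.update_eq_self_iff.2 h.symm
  exact hΓ.intEq_mem_iff.1 (hI ▸ hΓ.thm_mem (.a4 I X x))

theorem canonicalEnv_of_exo (hΓ : MaxConsistent Γ) {X : S.Var} (hX : S.exo X)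
    (h : I X = none) : canonicalEnv Γ I X = canonicalEnv Γ (iEmpty S) X :=
  hΓ.intEq_mem_iff.1 ((hΓ.iffF_mem_iff.1 (hΓ.thm_mem (.a7 I X _ hX h))).1
    (hΓ.intEq_canonicalEnv_mem _ X))

theorem canonicalEnv_iUpd_self (hΓ : MaxConsistent Γ) (I : Intervention S) (Y : S.Var) :
    canonicalEnv Γ (iUpd I Y (canonicalEnv Γ I Y)) = canonicalEnv Γ I := by
  funext Z
  exact hΓ.intEq_mem_iff.1 (hΓ.impl_mem_iff.1 (hΓ.thm_mem (.a3 I Y Z _ _))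
    (hΓ.conj_mem_iff.2 ⟨hΓ.intEq_canonicalEnv_mem I Y, hΓ.intEq_canonicalEnv_mem I Z⟩))

theorem canonicalEnv_override (hΓ : MaxConsistent Γ) (I : Intervention S) (s : Finset S.Var) :
    canonicalEnv Γ (fun W => if W ∈ s then some (canonicalEnv Γ I W) else I W)
      = canonicalEnv Γ I := by
  induction s using Finset.induction_on with
  | empty => simp
  | insert a s _ ih =>
    set J : Intervention S := fun W => if W ∈ s then some (canonicalEnv Γ I W) else I W
    have hJ : (fun W => if W ∈ insert a s then some (canonicalEnv Γ I W) else I W)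
        = iUpd J a (canonicalEnv Γ J a) := by
      funext W
      rcases eq_or_ne W a with rfl | hW <;> simp [J, iUpd, *]
    rw [hJ, hΓ.canonicalEnv_iUpd_self, ih]

theorem canonicalEnv_fullI (hΓ : MaxConsistent Γ) {V : S.Var} (hI : I V = none) :
    canonicalEnv Γ (fullI V ((canonicalEnv Γ I).restrict V)) = canonicalEnv Γ I := by
  convert hΓ.canonicalEnv_override I (Finset.univ.erase V) using 2
  funext W
  rcases eq_or_ne W V with rfl | hW <;> simp [fullI, Env.restrict, *]

end MaxConsistent

theorem canonicalFuns_eq_of_accessible {Γ Γ' : Set (Form S)} (hΓ : MaxConsistent Γ)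
    (hΓ' : MaxConsistent Γ') (hR : Accessible Γ Γ') {V : S.Var} (hV : ¬ S.exo V)
    (g : Others S V) : canonicalFuns Γ' V g = canonicalFuns Γ V g := by
  have hfull : ∀ W, (fullI V g W).isSome ↔ W ≠ V := fun W => by
    rcases eq_or_ne W V with rfl | hW <;> simp [fullI, *]
  have hK := hΓ.impl_mem_iff.1 (hΓ.thm_mem (.kl (fullI V g) V _ hV hfull))
    (hΓ.intEq_canonicalEnv_mem _ V)
  exact hΓ'.intEq_mem_iff.1 (hR _ hK)

theorem intervenedVal_canonicalEnv {Γ Γ' : Set (Form S)} (hΓ : MaxConsistent Γ)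
    (hΓ' : MaxConsistent Γ') (hR : Accessible Γ Γ') (I : Intervention S) :
    IntervenedVal (canonicalFuns Γ) (canonicalEnv Γ' (iEmpty S)) I (canonicalEnv Γ' I) := by
  refine ⟨fun X _ x hX => hΓ'.canonicalEnv_of_some hX, fun X hX hI => hΓ'.canonicalEnv_of_exo hX hI,
    fun V hV => ?_⟩
  cases hI : I V with
  | some v => simp [intF, hI, hΓ'.canonicalEnv_of_some hI]
  | none =>
    rw [intF, hI, Option.getD_none, ← canonicalFuns_eq_of_accessible hΓ hΓ' hR hV]
    exact (congrFun (hΓ'.canonicalEnv_fullI hI) V).symm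

theorem fullI_update {X V : S.Var} (hXV : X ≠ V) (g : Others S V) (x : S.Val X) :
    fullI V (Function.update g ⟨X, hXV⟩ x) = ltInt X V (fun W => g ⟨W.1, W.2.2⟩) x := by
  funext W
  rcases eq_or_ne W X with rfl | hWX
  · simp [fullI, ltInt, hXV]
  · rcases eq_or_ne W V with rfl | hWV
    · simp [fullI, ltInt, hWX]
    · simp [fullI, ltInt, hWX, hWV]

namespace MaxConsistent

variable {Γ : Set (Form S)}

theorem leadsTo_mem (hΓ : MaxConsistent Γ) {X V : S.Var} (h : DirAff (canonicalFuns Γ) X V) :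
    leadsTo X V ∈ Γ := by
  obtain ⟨-, hXV, g, x₁, x₂, hx, hg⟩ := h
  refine hΓ.bigOr_mem_iff.2 ⟨_, List.mem_map.2 ⟨⟨fun W => g ⟨W.1, W.2.2⟩, (x₁, x₂),
    (canonicalFuns Γ V (Function.update g ⟨X, hXV⟩ x₁),
      canonicalFuns Γ V (Function.update g ⟨X, hXV⟩ x₂))⟩, by simp [hx, hg], rfl⟩, ?_⟩
  simp only [hΓ.conj_mem_iff, ← fullI_update hXV]
  exact ⟨hΓ.intEq_canonicalEnv_mem _ V, hΓ.intEq_canonicalEnv_mem _ V⟩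

theorem chainConj_mem (hΓ : MaxConsistent Γ) (X : ℕ → S.Var) (k : ℕ)
    (h : ∀ i ≤ k, leadsTo (X i) (X (i + 1)) ∈ Γ) : chainConj X k ∈ Γ := by
  induction k with
  | zero => exact h 0 le_rfl
  | succ k ih =>
    exact hΓ.conj_mem_iff.2 ⟨ih fun i hi => h i (by omega), h (k + 1) le_rfl⟩

theorem recursiveF_canonicalFuns (hΓ : MaxConsistent Γ) : RecursiveF (canonicalFuns Γ) := by
  intro a b hab hba
  obtain ⟨X, n, hX0, hXn, hX⟩ := (hab.trans hba).exists_seq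
  have hcycle : DirAff (canonicalFuns Γ) (X n) (X 0) := by
    simpa [hXn, hX0] using hX n le_rfl
  cases n with
  | zero => exact hcycle.ne rfl
  | succ k =>
    have hchain := hΓ.chainConj_mem X k fun i hi => hΓ.leadsTo_mem (hX i (by omega))
    have ha6 := hΓ.thm_mem (.a6 X k (fun i hi => (hX i (by omega)).ne) hcycle.ne)
    exact hΓ.neg_mem_iff.1 (hΓ.impl_mem_iff.1 ha6 hchain) (hΓ.leadsTo_mem hcycle)

theorem canonicalEnv_mem_canonicalWorlds (hΓ : MaxConsistent Γ) :
    canonicalEnv Γ (iEmpty S) ∈ canonicalWorlds Γ :=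
  ⟨Γ, ⟨hΓ, hΓ.accessible_refl⟩, rfl⟩

theorem complies_of_mem_canonicalWorlds (hΓ : MaxConsistent Γ) :
    ∀ A ∈ canonicalWorlds Γ, Complies (canonicalFuns Γ) A := by
  rintro _ ⟨Γ', ⟨hΓ', hR⟩, rfl⟩ V hV
  simpa [intF, iEmpty] using (intervenedVal_canonicalEnv hΓ hΓ' hR (iEmpty S)).2.2 V hV

theorem mem_iff_satK (hΓ : MaxConsistent Γ) {φ : Form S} (hφ : IsKC' φ) {Γ' : Set (Form S)}
    (hΓ' : MaxConsistent Γ') (hR : Accessible Γ Γ') :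
    φ ∈ Γ' ↔ SatK φ (canonicalFuns Γ) (canonicalWorlds Γ) (canonicalEnv Γ' (iEmpty S)) := by
  induction hφ generalizing Γ' with
  | intEq I Y y =>
    rw [SatK, intVal_eq hΓ.recursiveF_canonicalFuns (intervenedVal_canonicalEnv hΓ hΓ' hR I)]
    exact hΓ'.intEq_mem_iff
  | neg _ ih => rw [SatK, ← ih hΓ' hR, hΓ'.neg_mem_iff]
  | conj _ _ ih₁ ih₂ => rw [SatK, ← ih₁ hΓ' hR, ← ih₂ hΓ' hR, hΓ'.conj_mem_iff]
  | @know ψ _ ih =>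
    refine ⟨fun hK => ?_, fun hsat => ?_⟩
    · rintro _ ⟨Δ, ⟨hΔ, hRΔ⟩, rfl⟩
      exact (ih hΔ hRΔ).1 (hΓ'.accessible_trans (hΓ.accessible_symm hΓ' hR) hRΔ ψ hK)
    · by_contra hK
      obtain ⟨Δ, hΔ, hRΔ, hψ⟩ := hΓ'.exists_accessible_not_mem hK
      have hRΓΔ := hΓ.accessible_trans hR hRΔ
      exact hψ ((ih hΔ hRΓΔ).2 (hsat _ ⟨Δ, ⟨hΔ, hRΓΔ⟩, rfl⟩))

end MaxConsistent

/-- Theorem: the proof system L′_KC is strongly complete for the language L′_KC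
with respect to epistemic (recursive) causal models. -/
theorem LKC'_strongly_complete (S : Sig) (Δ : Set (Form S)) (δ : Form S)
    (hΔ : ∀ ψ ∈ Δ, IsKC' ψ) (hδ : IsKC' δ)
    (hsem : ∀ (F : StructFuns S) (T : Set (Env S)) (A : Env S),
      RecursiveF F → T.Nonempty → (∀ B ∈ T, Complies F B) → A ∈ T →
      (∀ ψ ∈ Δ, SatK ψ F T A) → SatK δ F T A) :
    ProvKC' Δ δ := by
  by_contra hnot
  obtain ⟨Γ, hsub, hΓ⟩ :=
    exists_maxConsistent_superset fun h => hnot (ProvKC'.by_contradiction h)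
  have hworld := hΓ.canonicalEnv_mem_canonicalWorlds
  have hsat := hsem _ _ _ hΓ.recursiveF_canonicalFuns ⟨_, hworld⟩
    hΓ.complies_of_mem_canonicalWorlds hworld fun ψ hψ =>
      (hΓ.mem_iff_satK (hΔ ψ hψ) hΓ hΓ.accessible_refl).1 (hsub (Set.mem_insert_of_mem _ hψ))
  exact hΓ.neg_mem_iff.1 (hsub (Set.mem_insert _ _))
    ((hΓ.mem_iff_satK hδ hΓ hΓ.accessible_refl).2 hsat)
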